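/- Let s_1, …, s_n be finite binary sequences none of which is of the form 1^m (m ≥ 0, including the empty sequence), and let t_1, …, t_n be integers with t_1 + ⋯ + t_n = 0. Then the product y_{s_1}^{t_1} ⋯ y_{s_n}^{t_n} lies in the group S. -/

import Mathlib

/-- The Cantor set of infinite binary sequences. -/
abbrev Cantor : Type := ℕ → Bool

/-- Concatenation of a finite binary sequence with an infinite binary sequence. -/
def cat (s : List Bool) (η : Cantor) : Cantor :=
  fun n => if h : n < s.length then s.get ⟨n, h⟩ else η (n - s.length)

/-- `s` is a (finite) prefix of the infinite sequence `ξ`. -/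
def IsPrefixOf (s : List Bool) (ξ : Cantor) : Prop := ∃ η : Cantor, ξ = cat s η

/-- The group of self-homeomorphisms of a topological space, with
`(f * g) ξ = f (g ξ)` (i.e. in the right-action convention `ξ·(g h) = (ξ·g)·h`,
the product `g * f` corresponds to the word "apply `f`, then `g`"). -/
instance {α : Type*} [TopologicalSpace α] : Group (α ≃ₜ α) where
  mul f g := g.trans f
  one := Homeomorph.refl α
  inv := Homeomorph.symm
  mul_assoc _ _ _ := Homeomorph.ext fun _ => rfl
  one_mul _ := Homeomorph.ext fun _ => rfl
  mul_one _ := Homeomorph.ext fun _ => rfl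
  inv_mul_cancel f := Homeomorph.ext fun ξ => f.symm_apply_apply ξ

@[simp] lemma homeo_mul_apply {α : Type*} [TopologicalSpace α] (f g : α ≃ₜ α) (ξ : α) :
    (f * g) ξ = f (g ξ) := rfl

@[simp] lemma homeo_one_apply {α : Type*} [TopologicalSpace α] (ξ : α) :
    (1 : α ≃ₜ α) ξ = ξ := rfl

@[simp] lemma homeo_inv_apply {α : Type*} [TopologicalSpace α] (f : α ≃ₜ α) (ξ : α) :
    (f⁻¹ : α ≃ₜ α) ξ = f.symm ξ := rfl

/-- The data of the basic homeomorphisms `x`, `y`, `x_s`, `y_s`, `p_n` of the Cantor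
set, together with their recursive defining equations. -/
structure LMData where
  x : Cantor ≃ₜ Cantor
  y : Cantor ≃ₜ Cantor
  xx : List Bool → Cantor ≃ₜ Cantor
  yy : List Bool → Cantor ≃ₜ Cantor
  p : ℕ → Cantor ≃ₜ Cantor
  hx00 : ∀ η, x (cat [false, false] η) = cat [false] η
  hx01 : ∀ η, x (cat [false, true] η) = cat [true, false] η
  hx1 : ∀ η, x (cat [true] η) = cat [true, true] η
  hy00 : ∀ η, y (cat [false, false] η) = cat [false] (y η)
  hy01 : ∀ η, y (cat [false, true] η) = cat [true, false] (y.symm η)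
  hy1 : ∀ η, y (cat [true] η) = cat [true, true] (y η)
  hxx : ∀ s η, xx s (cat s η) = cat s (x η)
  hxx' : ∀ s ξ, ¬ IsPrefixOf s ξ → xx s ξ = ξ
  hyy : ∀ s η, yy s (cat s η) = cat s (y η)
  hyy' : ∀ s ξ, ¬ IsPrefixOf s ξ → yy s ξ = ξ
  hp1 : ∀ n k η, k < n → p n (cat (List.replicate k true ++ [false]) η) =
      cat (List.replicate (k + 1) true ++ [false]) η
  hp2 : ∀ n η, p n (cat (List.replicate n true ++ [false]) η) =
      cat (List.replicate (n + 1) true) η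
  hp3 : ∀ n η, p n (cat (List.replicate (n + 1) true) η) = cat [false] η

/-- Thompson's group `T`, generated by all `x_s` and all `p_n`. -/
def Tgrp (D : LMData) : Subgroup (Cantor ≃ₜ Cantor) :=
  Subgroup.closure (Set.range D.xx ∪ Set.range D.p)

/-- The group `Ŝ`, generated by all `x_s`, all `y_s` and all `p_n`. -/
def Shat (D : LMData) : Subgroup (Cantor ≃ₜ Cantor) :=
  Subgroup.closure (Set.range D.xx ∪ Set.range D.yy ∪ Set.range D.p)

/-- The homeomorphism `y₁₀ y₁₁₀⁻¹` (right-action word: first `y₁₀`, then `y₁₁₀⁻¹`). -/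
def sgen (D : LMData) : Cantor ≃ₜ Cantor :=
  (D.yy [true, true, false])⁻¹ * D.yy [true, false]

/-- The group `S`, generated by Thompson's group `T` together with `y₁₀ y₁₁₀⁻¹`. -/
def Sgrp (D : LMData) : Subgroup (Cantor ≃ₜ Cantor) :=
  Subgroup.closure (↑(Tgrp D) ∪ {sgen D})

/-- The Lodha–Moore group `_yG_y`, generated by all `x_s` and all `y_s`. -/
def LMgrp (D : LMData) : Subgroup (Cantor ≃ₜ Cantor) :=
  Subgroup.closure (Set.range D.xx ∪ Set.range D.yy)

/-!
If `g ∈ T` maps the cones `10` and `110` onto cones `u` and `w` by prefix replacement, then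
conjugating `y₁₀ y₁₁₀⁻¹` by `g` gives `y_u y_w⁻¹`, so `y_u` and `y_w` lie in the same coset of
`S`. A handful of such moves, transported into arbitrary subcones by elements of `T`, connect all
`y_u` with `u` containing a `0`. When `u` and `w` are incomparable, `y_u` and `y_w` commute, so
`y_u ^ t` and `y_w ^ t` also share a coset; comparable `u` and `w` are connected through a third
cone incomparable with both. A product with exponent sum zero then telescopes into `S`.
-/

section Telescoping

variable {G α : Type*} [Group G] {H : Subgroup G}

theorem QuotientGroup.mk_zpow_eq_of_commute {a b : G} (hab : Commute a b)
    (h : (a : G ⧸ H) = b) (t : ℤ) : ((a ^ t : G) : G ⧸ H) = (b ^ t : G) := by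
  rw [QuotientGroup.eq] at h ⊢
  rw [← inv_zpow, ← (hab.inv_left).mul_zpow]
  exact zpow_mem h t

theorem QuotientGroup.mk_prod_map_zpow_eq_zpow_sum {P : α → Prop} (f : α → G)
    (hf : ∀ a b, P a → P b → ∀ t : ℤ, ((f a ^ t : G) : G ⧸ H) = (f b ^ t : G)) :
    ∀ L : List (α × ℤ), (∀ p ∈ L, P p.1) → ∀ c, P c →
      (((L.map fun p => f p.1 ^ p.2).prod : G) : G ⧸ H) = (f c ^ (L.map Prod.snd).sum : G)
  | [], _, c, _ => by simp
  | (a, t) :: L, hL, c, hc => by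
    have ha : P a := hL (a, t) List.mem_cons_self
    have ih := mk_prod_map_zpow_eq_zpow_sum f hf L
      (fun p hp => hL p (List.mem_cons_of_mem _ hp)) a ha
    simp only [List.map_cons, List.prod_cons, List.sum_cons]
    rw [← smul_eq_mul, ← MulAction.Quotient.smul_mk, ih, MulAction.Quotient.smul_mk, smul_eq_mul,
      ← zpow_add, hf a c ha hc]

end Telescoping

section Cones

lemma cat_nil (η : Cantor) : cat [] η = η := by
  funext n
  simp [cat]

lemma cat_append (s t : List Bool) (η : Cantor) : cat (s ++ t) η = cat s (cat t η) := by
  funext n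
  simp only [cat, List.length_append, List.get_eq_getElem]
  split_ifs <;> simp_all [Nat.sub_sub] <;> omega

lemma IsPrefixOf.apply_eq {s : List Bool} {ξ : Cantor} (h : IsPrefixOf s ξ) (k : ℕ)
    (hk : k < s.length) : ξ k = s[k] := by
  obtain ⟨η, rfl⟩ := h
  exact dif_pos hk

lemma IsPrefixOf.prefix_or_prefix {u w : List Bool} {ξ : Cantor} (hu : IsPrefixOf u ξ)
    (hw : IsPrefixOf w ξ) : u <+: w ∨ w <+: u := by
  wlog hlen : u.length ≤ w.length generalizing u w
  · exact (this hw hu (by omega)).symm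
  left
  rw [List.prefix_iff_eq_take]
  apply List.ext_getElem (by simp [hlen])
  intro k hk _
  rw [List.getElem_take, ← hu.apply_eq, ← hw.apply_eq]

def Incomparable (u w : List Bool) : Prop := ¬ u <+: w ∧ ¬ w <+: u

lemma Incomparable.symm {u w : List Bool} (h : Incomparable u w) : Incomparable w u :=
  ⟨h.2, h.1⟩

lemma incomparable_cons_cons {a b : Bool} (hab : a ≠ b) (u w : List Bool) :
    Incomparable (a :: u) (b :: w) := by
  simp [Incomparable, List.cons_prefix_cons, hab, Ne.symm hab]

lemma Incomparable.not_isPrefixOf_cat {u w : List Bool} (h : Incomparable u w) (η : Cantor) :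
    ¬ IsPrefixOf w (cat u η) := fun hw =>
  (IsPrefixOf.prefix_or_prefix ⟨η, rfl⟩ hw).elim h.1 h.2

lemma eq_replicate_true_of_false_notMem {l : List Bool} (h : false ∉ l) :
    l = List.replicate l.length true :=
  List.eq_replicate_of_mem fun b hb => by cases b <;> simp_all

def MapsCone (g : Cantor ≃ₜ Cantor) (a b : List Bool) : Prop := ∀ η, g (cat a η) = cat b η

namespace MapsCone

variable {f g : Cantor ≃ₜ Cantor} {a b c : List Bool}

lemma one (a : List Bool) : MapsCone 1 a a := fun _ => rfl

lemma mul (hg : MapsCone g b c) (hf : MapsCone f a b) : MapsCone (g * f) a c := fun η => by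
  rw [homeo_mul_apply, hf, hg]

lemma inv (hg : MapsCone g a b) : MapsCone g⁻¹ b a := fun η => by
  rw [homeo_inv_apply, ← hg, Homeomorph.symm_apply_apply]

lemma append (hg : MapsCone g a b) (c : List Bool) : MapsCone g (a ++ c) (b ++ c) := fun η => by
  rw [cat_append, hg, cat_append]

lemma not_isPrefixOf_inv_apply (hg : MapsCone g a b) {ξ : Cantor} (h : ¬ IsPrefixOf b ξ) :
    ¬ IsPrefixOf a (g⁻¹ ξ) := by
  rintro ⟨η, hη⟩
  exact h ⟨η, by rw [← hg η, ← hη, homeo_inv_apply, Homeomorph.apply_symm_apply]⟩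

end MapsCone

end Cones

namespace LMData

variable (D : LMData)

lemma yy_conj {g : Cantor ≃ₜ Cantor} {a b : List Bool} (hg : MapsCone g a b) :
    g * D.yy a * g⁻¹ = D.yy b := by
  ext1 ξ
  simp only [homeo_mul_apply]
  by_cases hb : IsPrefixOf b ξ
  · obtain ⟨η, rfl⟩ := hb
    rw [hg.inv, D.hyy, hg, D.hyy]
  · rw [D.hyy' a _ (hg.not_isPrefixOf_inv_apply hb), homeo_inv_apply,
      Homeomorph.apply_symm_apply, D.hyy' b _ hb]

lemma yy_commute {u w : List Bool} (h : Incomparable u w) : Commute (D.yy u) (D.yy w) := by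
  ext1 ξ
  simp only [homeo_mul_apply]
  by_cases hu : IsPrefixOf u ξ
  · obtain ⟨η, rfl⟩ := hu
    rw [D.hyy' w _ (h.not_isPrefixOf_cat _), D.hyy u η, D.hyy' w _ (h.not_isPrefixOf_cat _)]
  · by_cases hw : IsPrefixOf w ξ
    · obtain ⟨η, rfl⟩ := hw
      rw [D.hyy w η, D.hyy' u _ (h.symm.not_isPrefixOf_cat _),
        D.hyy' u _ (h.symm.not_isPrefixOf_cat _), D.hyy w η]
    · rw [D.hyy' w _ hw, D.hyy' u _ hu, D.hyy' w _ hw]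

lemma xx_nil : D.xx [] = D.x := by
  ext1 ξ
  simpa [cat_nil] using D.hxx [] ξ

lemma xx_mem_Tgrp (s : List Bool) : D.xx s ∈ Tgrp D :=
  Subgroup.subset_closure (Or.inl ⟨s, rfl⟩)

lemma p_mem_Tgrp (n : ℕ) : D.p n ∈ Tgrp D :=
  Subgroup.subset_closure (Or.inr ⟨n, rfl⟩)

lemma x_mem_Tgrp : D.x ∈ Tgrp D := D.xx_nil ▸ D.xx_mem_Tgrp []

lemma Tgrp_le_Sgrp : Tgrp D ≤ Sgrp D :=
  fun _ hg => Subgroup.subset_closure (Or.inl hg)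

lemma sgen_mem_Sgrp : sgen D ∈ Sgrp D :=
  Subgroup.subset_closure (Or.inr rfl)

def Reach (u v : List Bool) : Prop := ∃ g ∈ Tgrp D, MapsCone g u v

def GoodPair (u w : List Bool) : Prop :=
  ∃ g ∈ Tgrp D, MapsCone g [true, false] u ∧ MapsCone g [true, true, false] w

def yCoset (u : List Bool) : (Cantor ≃ₜ Cantor) ⧸ Sgrp D := D.yy u

variable {D}

lemma Reach.trans {u v w : List Bool} (h₁ : D.Reach u v) (h₂ : D.Reach v w) : D.Reach u w := by
  obtain ⟨g₁, hg₁, hm₁⟩ := h₁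
  obtain ⟨g₂, hg₂, hm₂⟩ := h₂
  exact ⟨g₂ * g₁, mul_mem hg₂ hg₁, hm₂.mul hm₁⟩

lemma Reach.symm {u v : List Bool} (h : D.Reach u v) : D.Reach v u := by
  obtain ⟨g, hg, hm⟩ := h
  exact ⟨g⁻¹, inv_mem hg, hm.inv⟩

lemma Reach.append {u v : List Bool} (h : D.Reach u v) (s : List Bool) :
    D.Reach (u ++ s) (v ++ s) := by
  obtain ⟨g, hg, hm⟩ := h
  exact ⟨g, hg, hm.append s⟩

variable (D)

lemma reach_true (v : List Bool) (hv : v ≠ []) : D.Reach [true] v := by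
  induction v using List.reverseRecOn with
  | nil => exact absurd rfl hv
  | append_singleton w b ih =>
    have hchild : D.Reach [true] [true, b] := by
      cases b
      · exact ⟨D.p 1 * D.p 0, mul_mem (D.p_mem_Tgrp 1) (D.p_mem_Tgrp 0),
          MapsCone.mul (fun η => D.hp1 1 0 η one_pos) (D.hp3 0)⟩
      · exact ⟨D.x, D.x_mem_Tgrp, D.hx1⟩
    rcases eq_or_ne w [] with rfl | hw
    · cases b
      · exact ⟨D.p 0, D.p_mem_Tgrp 0, D.hp3 0⟩
      · exact ⟨1, one_mem _, MapsCone.one _⟩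
    · exact hchild.trans ((ih hw).append [b])

lemma reach_of_ne_nil {u v : List Bool} (hu : u ≠ []) (hv : v ≠ []) : D.Reach u v :=
  (D.reach_true u hu).symm.trans (D.reach_true v hv)

lemma goodPair_base : D.GoodPair [true, false] [true, true, false] :=
  ⟨1, one_mem _, MapsCone.one _, MapsCone.one _⟩

lemma goodPair_false_trueFalse : D.GoodPair [false] [true, false] :=
  ⟨(D.p 2)⁻¹, inv_mem (D.p_mem_Tgrp 2), MapsCone.inv fun η => D.hp1 2 0 η two_pos,
    MapsCone.inv fun η => D.hp1 2 1 η one_lt_two⟩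

lemma goodPair_trueTrue_falseFalse : D.GoodPair [true, true] [false, false] :=
  ⟨D.p 1, D.p_mem_Tgrp 1, D.hp2 1, MapsCone.append (D.hp3 1) [false]⟩

lemma goodPair_falseFalse_falseTrue : D.GoodPair [false, false] [false, true] := by
  obtain ⟨g, hg, h₁, h₂⟩ := D.goodPair_false_trueFalse
  exact ⟨D.x⁻¹ * g, mul_mem (inv_mem D.x_mem_Tgrp) hg, (MapsCone.inv D.hx00).mul h₁,
    (MapsCone.inv D.hx01).mul h₂⟩

lemma goodPair_falseFalseTrue_falseTrue : D.GoodPair [false, false, true] [false, true] :=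
  ⟨D.x⁻¹ * D.x⁻¹, mul_mem (inv_mem D.x_mem_Tgrp) (inv_mem D.x_mem_Tgrp),
    ((MapsCone.append D.hx00 [true]).inv).mul (MapsCone.inv D.hx01),
    (MapsCone.inv D.hx01).mul (MapsCone.append D.hx1 [false]).inv⟩

variable {D}

lemma GoodPair.yCoset_eq {u w : List Bool} (h : D.GoodPair u w) : D.yCoset u = D.yCoset w := by
  obtain ⟨g, hg, hu, hw⟩ := h
  have hconj : g * sgen D * g⁻¹ = (D.yy w)⁻¹ * D.yy u := by
    rw [← D.yy_conj hu, ← D.yy_conj hw, sgen]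
    group
  refine (QuotientGroup.eq.mpr ?_).symm
  rw [← hconj]
  have hgS := D.Tgrp_le_Sgrp hg
  exact mul_mem (mul_mem hgS D.sgen_mem_Sgrp) (inv_mem hgS)

lemma GoodPair.yCoset_append_eq {d u w : List Bool} (h : D.GoodPair (d ++ u) (d ++ w))
    (hd : d ≠ []) {v : List Bool} (hv : v ≠ []) : D.yCoset (v ++ u) = D.yCoset (v ++ w) := by
  obtain ⟨g, hg, hu, hw⟩ := h
  obtain ⟨r, hr, hm⟩ := D.reach_of_ne_nil hd hv
  exact GoodPair.yCoset_eq ⟨r * g, mul_mem hr hg, (hm.append u).mul hu, (hm.append w).mul hw⟩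

variable (D) {v : List Bool}

lemma yCoset_append_false_eq_append_true (hv : v ≠ []) :
    D.yCoset (v ++ [false]) = D.yCoset (v ++ [true]) :=
  GoodPair.yCoset_append_eq (d := [false]) D.goodPair_falseFalse_falseTrue (List.cons_ne_nil _ _) hv

lemma yCoset_append_false_eq_append_true_false (hv : v ≠ []) :
    D.yCoset (v ++ [false]) = D.yCoset (v ++ [true, false]) :=
  GoodPair.yCoset_append_eq (d := [true]) D.goodPair_base (List.cons_ne_nil _ _) hv

lemma yCoset_append_false_true_eq_append_true (hv : v ≠ []) :
    D.yCoset (v ++ [false, true]) = D.yCoset (v ++ [true]) :=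
  GoodPair.yCoset_append_eq (d := [false]) D.goodPair_falseFalseTrue_falseTrue
    (List.cons_ne_nil _ _) hv

lemma yCoset_falseFalse_eq_false : D.yCoset [false, false] = D.yCoset [false] :=
  calc D.yCoset [false, false] = D.yCoset [true, true] :=
        D.goodPair_trueTrue_falseFalse.yCoset_eq.symm
    _ = D.yCoset [true, false] :=
        (D.yCoset_append_false_eq_append_true (v := [true]) (List.cons_ne_nil _ _)).symm
    _ = D.yCoset [false] := D.goodPair_false_trueFalse.yCoset_eq.symm

lemma yCoset_append_false_of_false_mem (hv : false ∈ v) :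
    D.yCoset (v ++ [false]) = D.yCoset v := by
  obtain ⟨w, c, rfl⟩ := List.eq_nil_or_concat v |>.resolve_left (by rintro rfl; simp at hv)
  rw [List.concat_eq_append, List.append_assoc]
  cases c
  · rcases eq_or_ne w [] with rfl | hw
    · exact D.yCoset_falseFalse_eq_false
    · calc D.yCoset (w ++ [false, false]) = D.yCoset (w ++ [false, true]) := by
            simpa using D.yCoset_append_false_eq_append_true (v := w ++ [false]) (by simp)
        _ = D.yCoset (w ++ [true]) := D.yCoset_append_false_true_eq_append_true hw
        _ = D.yCoset (w ++ [false]) := (D.yCoset_append_false_eq_append_true hw).symm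
  · have hw : w ≠ [] := by rintro rfl; simp at hv
    calc D.yCoset (w ++ [true, false]) = D.yCoset (w ++ [false]) :=
          (D.yCoset_append_false_eq_append_true_false hw).symm
      _ = D.yCoset (w ++ [true]) := D.yCoset_append_false_eq_append_true hw

lemma yCoset_append_of_false_mem (hv : false ∈ v) (b : Bool) :
    D.yCoset (v ++ [b]) = D.yCoset v := by
  cases b
  · exact D.yCoset_append_false_of_false_mem hv
  · rw [← D.yCoset_append_false_eq_append_true (List.ne_nil_of_mem hv)]
    exact D.yCoset_append_false_of_false_mem hv

lemma yCoset_replicate_true_append_false (k : ℕ) :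
    D.yCoset (List.replicate k true ++ [false]) = D.yCoset [false] := by
  induction k with
  | zero => rfl
  | succ k ih =>
    rcases eq_or_ne k 0 with rfl | hk
    · exact D.goodPair_false_trueFalse.yCoset_eq.symm
    · rw [List.replicate_succ', List.append_assoc, ← ih]
      exact (D.yCoset_append_false_eq_append_true_false (by simpa using hk)).symm

lemma yCoset_eq_of_false_mem (hv : false ∈ v) : D.yCoset v = D.yCoset [false] := by
  induction v using List.reverseRecOn with
  | nil => simp at hv
  | append_singleton u b ih =>
    by_cases hu : false ∈ u
    · rw [D.yCoset_append_of_false_mem hu, ih hu]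
    · obtain rfl : b = false := by simpa [hu] using hv
      rw [eq_replicate_true_of_false_notMem hu]
      exact D.yCoset_replicate_true_append_false _

variable {a b : List Bool}

lemma mk_yy_zpow_eq_of_incomparable (h : Incomparable a b) (ha : false ∈ a) (hb : false ∈ b)
    (t : ℤ) : ((D.yy a ^ t : Cantor ≃ₜ Cantor) : (Cantor ≃ₜ Cantor) ⧸ Sgrp D) = (D.yy b ^ t :) :=
  QuotientGroup.mk_zpow_eq_of_commute (D.yy_commute h)
    ((D.yCoset_eq_of_false_mem ha).trans (D.yCoset_eq_of_false_mem hb).symm) t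

lemma mk_yy_zpow_eq (ha : false ∈ a) (hb : false ∈ b) (t : ℤ) :
    ((D.yy a ^ t : Cantor ≃ₜ Cantor) : (Cantor ≃ₜ Cantor) ⧸ Sgrp D) = (D.yy b ^ t :) := by
  obtain ⟨x, a, rfl⟩ := List.exists_cons_of_ne_nil (List.ne_nil_of_mem ha)
  obtain ⟨y, b, rfl⟩ := List.exists_cons_of_ne_nil (List.ne_nil_of_mem hb)
  by_cases hxy : x = y
  · subst hxy
    have hc : false ∈ [!x, false] := by simp
    have hne : (!x) ≠ x := by cases x <;> decide
    rw [D.mk_yy_zpow_eq_of_incomparable (incomparable_cons_cons hne.symm _ _) ha hc,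
      D.mk_yy_zpow_eq_of_incomparable (incomparable_cons_cons hne _ _) hc hb]
  · exact D.mk_yy_zpow_eq_of_incomparable (incomparable_cons_cons hxy _ _) ha hb t

end LMData

/-- a product `y_{s₁}^{t₁} ⋯ y_{sₙ}^{tₙ}` with no `sᵢ` of the form `1^m`
and with exponent sum `0` lies in `S` (right-action word, reversed in composition
order). -/
theorem statement7 (D : LMData) (n : ℕ) (s : Fin n → List Bool)
    (hs : ∀ i : Fin n, ∀ m : ℕ, s i ≠ List.replicate m true)
    (t : Fin n → ℤ) (ht : ∑ i, t i = 0) :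
    (List.ofFn fun i => (D.yy (s i)) ^ (t i)).reverse.prod ∈ Sgrp D := by
  set L := (List.ofFn fun i => (s i, t i)).reverse
  have hadm : ∀ p ∈ L, false ∈ p.1 := by
    intro p hp
    obtain ⟨i, rfl⟩ := List.mem_ofFn.mp (List.mem_reverse.mp hp)
    by_contra hf
    exact hs i _ (eq_replicate_true_of_false_notMem hf)
  have hprod : (List.ofFn fun i => (D.yy (s i)) ^ (t i)).reverse =
      L.map fun p => D.yy p.1 ^ p.2 := by
    simp [L, List.map_reverse, List.map_ofFn, Function.comp_def]
  have hsum : (L.map Prod.snd).sum = 0 := by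
    simp [L, List.map_reverse, List.map_ofFn, Function.comp_def, List.sum_ofFn, ht]
  have hcoset := QuotientGroup.mk_prod_map_zpow_eq_zpow_sum D.yy
    (fun a b ha hb => D.mk_yy_zpow_eq ha hb) L hadm [false] (List.mem_singleton_self _)
  rw [hsum, zpow_zero, QuotientGroup.eq] at hcoset
  simpa [hprod] using hcoset
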